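/- Let S be a finite bichromatic point set in the plane in general position (distinct x and y coordinates), let p₁,…,p₅ ∈ S be five points of the same color, and let B be any axis-aligned box with nonempty interior. Then the five points can be repositioned inside B (keeping their color, maintaining general position) so that in the resulting point set the point p₁ does not participate, i.e., no point of the opposite color spans an empty axis-aligned rectangle with p₁. -/

import Mathlib

open Classical

noncomputable section

abbrev Pt := ℝ × ℝ

/-- An axis-aligned box in the plane. -/
structure Box where
  x0 : ℝ
  x1 : ℝ
  y0 : ℝ
  y1 : ℝ
  hx : x0 < x1
  hy : y0 < y1

/-- The cross of a box: the union of its vertical and horizontal strips. -/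
def Box.cross (B : Box) : Set Pt :=
  {p | (B.x0 ≤ p.1 ∧ p.1 ≤ B.x1) ∨ (B.y0 ≤ p.2 ∧ p.2 ≤ B.y1)}

/-- The four open quadrants of a box. -/
def Box.NE (B : Box) : Set Pt := {p | B.x1 < p.1 ∧ B.y1 < p.2}
def Box.NW (B : Box) : Set Pt := {p | p.1 < B.x0 ∧ B.y1 < p.2}
def Box.SE (B : Box) : Set Pt := {p | B.x1 < p.1 ∧ p.2 < B.y0}
def Box.SW (B : Box) : Set Pt := {p | p.1 < B.x0 ∧ p.2 < B.y0}

/-- Membership in the open interior of a box. -/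
def Box.inside (B : Box) (p : Pt) : Prop :=
  B.x0 < p.1 ∧ p.1 < B.x1 ∧ B.y0 < p.2 ∧ p.2 < B.y1

/-- Membership in the closed box. -/
def Box.memClosed (B : Box) (p : Pt) : Prop :=
  B.x0 ≤ p.1 ∧ p.1 ≤ B.x1 ∧ B.y0 ≤ p.2 ∧ p.2 ≤ B.y1

/-- `p` avoids the boundary lines of the box and of its quadrants. -/
def Box.offBoundary (B : Box) (p : Pt) : Prop :=
  p.1 ≠ B.x0 ∧ p.1 ≠ B.x1 ∧ p.2 ≠ B.y0 ∧ p.2 ≠ B.y1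

/-- Minimal points of `T` towards the SW corner of the NE quadrant
(the usual minimal points under coordinatewise domination). -/
def neMinSet (T : Set Pt) : Set Pt :=
  {p ∈ T | ∀ q ∈ T, (q.1 ≤ p.1 ∧ q.2 ≤ p.2) → q = p}

/-- Minimal points of `T` towards the SE corner of the NW quadrant. -/
def nwMinSet (T : Set Pt) : Set Pt :=
  {p ∈ T | ∀ q ∈ T, (p.1 ≤ q.1 ∧ q.2 ≤ p.2) → q = p}

/-- Minimal points of `T` towards the NW corner of the SE quadrant. -/
def seMinSet (T : Set Pt) : Set Pt :=
  {p ∈ T | ∀ q ∈ T, (q.1 ≤ p.1 ∧ p.2 ≤ q.2) → q = p}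

/-- Minimal points of `T` towards the NE corner of the SW quadrant
(the usual maximal points under coordinatewise domination). -/
def swMinSet (T : Set Pt) : Set Pt :=
  {p ∈ T | ∀ q ∈ T, (p.1 ≤ q.1 ∧ p.2 ≤ q.2) → q = p}

/-- `z` lies in the open axis-aligned rectangle spanned by `p` and `q`. -/
def openRect (p q z : Pt) : Prop :=
  min p.1 q.1 < z.1 ∧ z.1 < max p.1 q.1 ∧ min p.2 q.2 < z.2 ∧ z.2 < max p.2 q.2

/-- `p` and `q` see each other in `S`: the open rectangle they span is empty of `S`. -/
def sees (S : Set Pt) (p q : Pt) : Prop := ∀ z ∈ S, ¬ openRect p q z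

/-- `p` participates in `S`: some point of the opposite color sees `p`. -/
def participates (S : Set Pt) (color : Pt → Bool) (p : Pt) : Prop :=
  ∃ q ∈ S, color q ≠ color p ∧ sees S p q

/-- All points of `S` in the cross of `B` have color `c`. -/
def crossSafeFor (S : Set Pt) (color : Pt → Bool) (c : Bool) (B : Box) : Prop :=
  ∀ p ∈ S, p ∈ B.cross → color p = c

/-- `B` is `c`-safe for `S`: `c`-cross-safe and the four directional minimal
sets of the quadrants only contain points of color `c`. -/
def safeFor (S : Set Pt) (color : Pt → Bool) (c : Bool) (B : Box) : Prop :=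
  crossSafeFor S color c B ∧
  (∀ p ∈ neMinSet (S ∩ B.NE), color p = c) ∧
  (∀ p ∈ nwMinSet (S ∩ B.NW), color p = c) ∧
  (∀ p ∈ seMinSet (S ∩ B.SE), color p = c) ∧
  (∀ p ∈ swMinSet (S ∩ B.SW), color p = c)

/-- `B` is safe: red-safe (`true`) or blue-safe (`false`). -/
def isSafe (S : Set Pt) (color : Pt → Bool) (B : Box) : Prop :=
  safeFor S color true B ∨ safeFor S color false B

/-- General position: pairwise distinct x-coordinates and y-coordinates. -/
def genPos (S : Set Pt) : Prop :=
  ∀ p ∈ S, ∀ q ∈ S, p ≠ q → p.1 ≠ q.1 ∧ p.2 ≠ q.2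

/-!
Put `q₀` at a point `c` of the box whose coordinates differ from those of all points of `S`,
and put the other four repositioned points on the two diagonals through `c`, one in each
quadrant, closer to `c` in both coordinates than any point of `S`. Any old point `z` lies in
some open quadrant around `c`, and the repositioned point in that quadrant lies in the open
rectangle spanned by `c` and `z`; so `c` sees only repositioned points, all of its own color.
-/

open Filter Topology

lemma genPos.mono {A A' : Set Pt} (h : genPos A) (hA : A' ⊆ A) : genPos A' :=
  fun p hp q hq hpq => h p (hA hp) q (hA hq) hpq

lemma genPos_union {A A' : Set Pt} (h : genPos A) (h' : genPos A')
    (hAA' : ∀ p ∈ A, ∀ q ∈ A', p.1 ≠ q.1 ∧ p.2 ≠ q.2) : genPos (A ∪ A') := by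
  rintro p (hp | hp) q (hq | hq) hpq
  · exact h p hp q hq hpq
  · exact hAA' p hp q hq
  · exact (hAA' q hq p hp).imp Ne.symm Ne.symm
  · exact h' p hp q hq hpq

lemma not_participates_of_forall_openRect {U : Set Pt} {color : Pt → Bool} {c : Pt}
    (h : ∀ z ∈ U, color z ≠ color c → ∃ w ∈ U, openRect c z w) :
    ¬ participates U color c := by
  rintro ⟨z, hz, hcol, hsee⟩
  obtain ⟨w, hw, hrect⟩ := h z hz hcol
  exact hsee w hw hrect

/-- The `i`-th guard sits on a diagonal through `c` at distance `i * ε` in each coordinate;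
the distinct distances keep all coordinates pairwise distinct. -/
def shield (c : Pt) (ε : ℝ) : Fin 5 → Pt :=
  ![c, (c.1 + ε, c.2 + ε), (c.1 - 2 * ε, c.2 + 2 * ε), (c.1 + 3 * ε, c.2 - 3 * ε),
    (c.1 - 4 * ε, c.2 - 4 * ε)]

section shield

variable {c : Pt} {ε : ℝ}

lemma abs_shield_sub (hε : 0 ≤ ε) (i : Fin 5) :
    |(shield c ε i).1 - c.1| = i * ε ∧ |(shield c ε i).2 - c.2| = i * ε := by
  fin_cases i <;> simp [shield, abs_of_nonneg, abs_of_nonpos, hε]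

lemma abs_shield_sub_le (hε : 0 ≤ ε) (i : Fin 5) :
    |(shield c ε i).1 - c.1| ≤ 4 * ε ∧ |(shield c ε i).2 - c.2| ≤ 4 * ε := by
  have hi : (i : ℝ) ≤ 4 := by exact_mod_cast Nat.le_of_lt_succ i.isLt
  rw [(abs_shield_sub hε i).1, (abs_shield_sub hε i).2]
  exact ⟨mul_le_mul_of_nonneg_right hi hε, mul_le_mul_of_nonneg_right hi hε⟩

lemma shield_ne_of_ne (hε : 0 < ε) {i j : Fin 5} (hij : i ≠ j) :
    (shield c ε i).1 ≠ (shield c ε j).1 ∧ (shield c ε i).2 ≠ (shield c ε j).2 := by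
  have hdist : (i : ℝ) * ε ≠ j * ε := by
    rw [Ne, mul_left_inj' hε.ne', Nat.cast_inj]
    exact Fin.val_ne_of_ne hij
  constructor <;> intro h <;> apply hdist
  · rw [← (abs_shield_sub (c := c) hε.le i).1, ← (abs_shield_sub (c := c) hε.le j).1, h]
  · rw [← (abs_shield_sub (c := c) hε.le i).2, ← (abs_shield_sub (c := c) hε.le j).2, h]

lemma shield_injective (hε : 0 < ε) : Function.Injective (shield c ε) := fun _ _ h =>
  by_contra fun hij => (shield_ne_of_ne hε hij).1 (congrArg Prod.fst h)

lemma genPos_range_shield (hε : 0 < ε) : genPos (Set.range (shield c ε)) := by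
  rintro _ ⟨i, rfl⟩ _ ⟨j, rfl⟩ hij
  exact shield_ne_of_ne hε (fun h => hij (congrArg _ h))

lemma ne_shield_of_far (hε : 0 ≤ ε) {z : Pt} (hx : 4 * ε < |z.1 - c.1|)
    (hy : 4 * ε < |z.2 - c.2|) (i : Fin 5) :
    z.1 ≠ (shield c ε i).1 ∧ z.2 ≠ (shield c ε i).2 := by
  obtain ⟨hix, hiy⟩ := abs_shield_sub_le (c := c) hε i
  constructor <;> intro h
  · rw [h] at hx
    linarith
  · rw [h] at hy
    linarith

lemma exists_openRect_shield (hε : 0 < ε) {z : Pt} (hx : 4 * ε < |z.1 - c.1|)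
    (hy : 4 * ε < |z.2 - c.2|) : ∃ i, openRect c z (shield c ε i) := by
  rw [lt_abs] at hx hy
  rcases hx with hx | hx <;> rcases hy with hy | hy
  exacts [⟨1, by simp [openRect, shield]; grind⟩, ⟨3, by simp [openRect, shield]; grind⟩,
    ⟨2, by simp [openRect, shield]; grind⟩, ⟨4, by simp [openRect, shield]; grind⟩]

end shield

lemma exists_inside_coords_notMem (S : Finset Pt) (B : Box) :
    ∃ c : Pt, B.inside c ∧ ∀ z ∈ S, z.1 ≠ c.1 ∧ z.2 ≠ c.2 := by
  obtain ⟨a, ⟨ha₀, ha₁⟩, ha⟩ := (Set.Ioo_infinite B.hx).exists_notMem_finset (S.image Prod.fst)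
  obtain ⟨b, ⟨hb₀, hb₁⟩, hb⟩ := (Set.Ioo_infinite B.hy).exists_notMem_finset (S.image Prod.snd)
  refine ⟨(a, b), ⟨ha₀, ha₁, hb₀, hb₁⟩, fun z hz => ⟨?_, ?_⟩⟩ <;> rintro rfl
  · exact ha (Finset.mem_image_of_mem _ hz)
  · exact hb (Finset.mem_image_of_mem _ hz)

lemma exists_shield_radius (S : Finset Pt) (B : Box) {c : Pt} (hc : B.inside c)
    (hS : ∀ z ∈ S, z.1 ≠ c.1 ∧ z.2 ≠ c.2) :
    ∃ ε > 0, (∀ i, B.inside (shield c ε i)) ∧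
      ∀ z ∈ S, 4 * ε < |z.1 - c.1| ∧ 4 * ε < |z.2 - c.2| := by
  have small : ∀ a : ℝ, 0 < a → ∀ᶠ ε in 𝓝[>] (0 : ℝ), 4 * ε < a := fun a ha =>
    nhdsWithin_le_nhds <| (eventually_lt_nhds (div_pos ha four_pos)).mono fun ε hε => by linarith
  obtain ⟨hc₁, hc₂, hc₃, hc₄⟩ := hc
  have hfar : ∀ᶠ ε in 𝓝[>] (0 : ℝ), ∀ z ∈ S, 4 * ε < |z.1 - c.1| ∧ 4 * ε < |z.2 - c.2| :=
    (eventually_all_finset S).2 fun z hz =>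
      (small _ (abs_pos.2 (sub_ne_zero.2 (hS z hz).1))).and
        (small _ (abs_pos.2 (sub_ne_zero.2 (hS z hz).2)))
  obtain ⟨ε, hε, h₁, h₂, h₃, h₄, hεS⟩ := (eventually_mem_nhdsWithin.and <|
    (small _ (sub_pos.2 hc₁)).and <| (small _ (sub_pos.2 hc₂)).and <|
      (small _ (sub_pos.2 hc₃)).and <| (small _ (sub_pos.2 hc₄)).and hfar).exists
  refine ⟨ε, hε, fun i => ?_, hεS⟩
  obtain ⟨hx, hy⟩ := abs_shield_sub_le (c := c) hε.le i
  rw [abs_le] at hx hy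
  exact ⟨by linarith [hx.1], by linarith [hx.2], by linarith [hy.1], by linarith [hy.2]⟩

theorem stmt3 (S : Finset Pt) (color : Pt → Bool) (hgp : genPos (↑S : Set Pt))
    (p : Fin 5 → Pt) (B : Box) :
    ∃ q : Fin 5 → Pt, Function.Injective q ∧ (∀ i, B.inside (q i)) ∧
      genPos (((↑S : Set Pt) \ Set.range p) ∪ Set.range q) ∧
      ¬ participates (((↑S : Set Pt) \ Set.range p) ∪ Set.range q)
          (fun z => if z ∈ Set.range q then color (p 0) else color z) (q 0) := by
  obtain ⟨c, hc, hcS⟩ := exists_inside_coords_notMem S B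
  obtain ⟨ε, hε, hinside, hfar⟩ := exists_shield_radius S B hc hcS
  refine ⟨shield c ε, shield_injective hε, hinside,
    genPos_union (hgp.mono Set.sdiff_subset) (genPos_range_shield hε) ?_,
    not_participates_of_forall_openRect ?_⟩
  · rintro z ⟨hz, -⟩ _ ⟨i, rfl⟩
    exact ne_shield_of_far hε.le (hfar z hz).1 (hfar z hz).2 i
  · rintro z (⟨hz, -⟩ | hz) hcol
    · obtain ⟨i, hi⟩ := exists_openRect_shield hε (hfar z hz).1 (hfar z hz).2
      exact ⟨shield c ε i, Or.inr ⟨i, rfl⟩, hi⟩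
    · simp [hz] at hcol
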